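/- Let C be a rotationally asymmetric configuration of distinct points on a circle with true leader L. If r is an expected leader of C (a sure leader or confused leader) distinct from L, then the clockwise angular distance from L to r is at least π. -/

import Mathlib

open Real

/-- Normalize a real number into `[0, 2π)` (representing an angle on the circle). -/
noncomputable def norm2pi (x : ℝ) : ℝ := (2 * π) * Int.fract (x / (2 * π))

/-- Clockwise angular distance from `a` to `b`, in `[0, 2π)`. -/
noncomputable def cwAngle (a b : ℝ) : ℝ := norm2pi (b - a)

/-- A configuration: a finite set of angles, all lying in `[0, 2π)`. -/
def OnCircle (s : Finset ℝ) : Prop := ∀ x ∈ s, 0 ≤ x ∧ x < 2 * π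

/-- Rotation of a configuration by angle `θ`. -/
noncomputable def rotConf (s : Finset ℝ) (θ : ℝ) : Finset ℝ :=
  s.image (fun x => norm2pi (x + θ))

/-- Rotational asymmetry: no nontrivial rotation preserves the configuration. -/
def RotAsym (s : Finset ℝ) : Prop := ∀ θ ∈ Set.Ioo 0 (2 * π), rotConf s θ ≠ s

/-- The clockwise gap (angle) sequence of the point `r` in configuration `s`:
consecutive clockwise angular gaps starting at `r`. -/
noncomputable def angleSeq (s : Finset ℝ) (r : ℝ) : List ℝ :=
  let l := ((s.erase r).image (fun x => cwAngle r x)).sort (· ≤ ·)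
  List.zipWith (fun u v => u - v) (l ++ [2 * π]) (0 :: l)

/-- Strict lexicographic order on lists of reals. -/
def ListLexLt (l₁ l₂ : List ℝ) : Prop := List.Lex (· < ·) l₁ l₂

/-- `r` is the true leader of `s`: its angle sequence is lexicographically strictly
smaller than that of every other point. -/
def IsTrueLeader (s : Finset ℝ) (r : ℝ) : Prop :=
  r ∈ s ∧ ∀ x ∈ s, x ≠ r → ListLexLt (angleSeq s r) (angleSeq s x)

/-- The antipodal position of a point `r`. -/
noncomputable def antip (r : ℝ) : ℝ := norm2pi (r + π)

/-- The configuration as seen from `r` assuming its antipodal position is empty. -/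
noncomputable def confC0 (s : Finset ℝ) (r : ℝ) : Finset ℝ := s.erase (antip r)

/-- The configuration as seen from `r` assuming its antipodal position is occupied. -/
noncomputable def confC1 (s : Finset ℝ) (r : ℝ) : Finset ℝ := insert (antip r) s

/-- A confused leader: both possibilities `C₀(r)` and `C₁(r)` are rotationally
asymmetric, and `r` is the true leader in exactly one of them. -/
def ConfusedLeader (s : Finset ℝ) (r : ℝ) : Prop :=
  r ∈ s ∧ RotAsym (confC0 s r) ∧ RotAsym (confC1 s r) ∧
    Xor' (IsTrueLeader (confC0 s r) r) (IsTrueLeader (confC1 s r) r)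

/-- A sure leader: `r` is the true leader in every possible (rotationally
asymmetric) configuration among `C₀(r)`, `C₁(r)`. -/
def SureLeader (s : Finset ℝ) (r : ℝ) : Prop :=
  r ∈ s ∧ (RotAsym (confC0 s r) → IsTrueLeader (confC0 s r) r) ∧
    (RotAsym (confC1 s r) → IsTrueLeader (confC1 s r) r)

/-- An expected leader is a sure leader or a confused leader. -/
def ExpectedLeader (s : Finset ℝ) (r : ℝ) : Prop := SureLeader s r ∨ ConfusedLeader s r

/-- `r'` is the first clockwise neighbor of `r` in `s`. -/
def IsCwNeighbor (s : Finset ℝ) (r r' : ℝ) : Prop :=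
  r' ∈ s ∧ r' ≠ r ∧ ∀ x ∈ s, x ≠ r → cwAngle r r' ≤ cwAngle r x

/-!
Compare points through their sets of clockwise offsets to the other points: a gap sequence is
lexicographically smaller exactly when its offset set owns the least element of the symmetric
difference (`FirstDiffLt`).

Let `d = cwAngle L r < π`. The possibilities `C₀(r)`, `C₁(r)` differ from `C` only at `r + π`,
that is at offset `π` from `r` and `d + π` from `L`. If `L` beats `r` in `C` at an offset below
`π`, it still does in `C₀(r)` and `C₁(r)`. Otherwise the offset sets of `L` and `r` agree on
`(0, π)`, in `C` and in both possibilities; if `r` led one of them, it would beat `L` at some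
offset `m ≥ π > d`, and since `r` sits at offset `d` from `L`, the point `r + d` would beat `r`
at offset `m - d`.
-/

open Finset Set

theorem norm2pi_eq_toIcoMod (x : ℝ) : norm2pi x = toIcoMod two_pi_pos 0 x := by
  rw [norm2pi, toIcoMod_eq_fract_mul, mul_comm]

theorem norm2pi_mem_Ico (x : ℝ) : norm2pi x ∈ Ico 0 (2 * π) := by
  simpa [norm2pi_eq_toIcoMod] using toIcoMod_mem_Ico' two_pi_pos x

theorem norm2pi_eq_self {x : ℝ} (hx : x ∈ Ico 0 (2 * π)) : norm2pi x = x := by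
  rw [norm2pi_eq_toIcoMod, toIcoMod_eq_self]
  simpa using hx

theorem norm2pi_eq_norm2pi_iff {x y : ℝ} : norm2pi x = norm2pi y ↔ x ≡ y [PMOD 2 * π] := by
  simp only [norm2pi_eq_toIcoMod, toIcoMod_inj]

theorem norm2pi_norm2pi_add (x y : ℝ) : norm2pi (norm2pi x + y) = norm2pi (x + y) :=
  norm2pi_eq_norm2pi_iff.2 <|
    (norm2pi_eq_norm2pi_iff.1 (norm2pi_eq_self (norm2pi_mem_Ico x))).add_right y

theorem injOn_norm2pi_add (p : ℝ) : InjOn (fun c => norm2pi (p + c)) (Ico 0 (2 * π)) := by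
  intro u hu v hv h
  have hmod := toIcoMod_inj (hp := two_pi_pos) (c := p) |>.2 (norm2pi_eq_norm2pi_iff.1 h)
  rwa [(toIcoMod_eq_self two_pi_pos).2 ⟨by linarith [hu.1], by linarith [hu.2]⟩,
    (toIcoMod_eq_self two_pi_pos).2 ⟨by linarith [hv.1], by linarith [hv.2]⟩, add_right_inj] at hmod

theorem norm2pi_add_zero {p : ℝ} (hp : p ∈ Ico 0 (2 * π)) : norm2pi (p + 0) = p := by
  rw [add_zero, norm2pi_eq_self hp]

theorem norm2pi_add_cwAngle (a : ℝ) {b : ℝ} (hb : b ∈ Ico 0 (2 * π)) :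
    norm2pi (a + cwAngle a b) = b := by
  rw [cwAngle, add_comm, norm2pi_norm2pi_add, sub_add_cancel, norm2pi_eq_self hb]

theorem cwAngle_norm2pi_add (a : ℝ) {c : ℝ} (hc : c ∈ Ico 0 (2 * π)) :
    cwAngle a (norm2pi (a + c)) = c := by
  rw [cwAngle, sub_eq_add_neg, norm2pi_norm2pi_add, add_neg_cancel_comm, norm2pi_eq_self hc]

theorem cwAngle_pos {a b : ℝ} (ha : a ∈ Ico 0 (2 * π)) (hb : b ∈ Ico 0 (2 * π)) (hab : a ≠ b) :
    0 < cwAngle a b := by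
  refine (norm2pi_mem_Ico _).1.lt_of_ne fun h => hab ?_
  rw [← norm2pi_add_cwAngle a hb, cwAngle, ← h, norm2pi_add_zero ha]

section FirstDiff

variable {α : Type*} [LinearOrder α]

def FirstDiffLt (A B : Finset α) : Prop :=
  ∃ m ∈ A, m ∉ B ∧ ∀ y < m, (y ∈ A ↔ y ∈ B)

theorem FirstDiffLt.asymm {A B : Finset α} (h : FirstDiffLt A B) : ¬ FirstDiffLt B A := by
  rintro ⟨m', hm'B, hm'A, hbelow'⟩
  obtain ⟨m, hmA, hmB, hbelow⟩ := h
  rcases lt_trichotomy m m' with hlt | rfl | hlt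
  · exact hmB ((hbelow' m hlt).2 hmA)
  · exact hmB hm'B
  · exact hm'A ((hbelow m' hlt).2 hm'B)

theorem firstDiffLt_or_firstDiffLt_of_ne {A B : Finset α} (h : A ≠ B) :
    FirstDiffLt A B ∨ FirstDiffLt B A := by
  have hne : (symmDiff A B).Nonempty := by
    rwa [Finset.nonempty_iff_ne_empty, ← Finset.bot_eq_empty, Ne, symmDiff_eq_bot]
  have hbelow : ∀ y < (symmDiff A B).min' hne, (y ∈ A ↔ y ∈ B) := fun y hy => by
    by_contra hy'
    exact not_le.2 hy (min'_le _ _ (Finset.mem_symmDiff.2 (by tauto)))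
  rcases Finset.mem_symmDiff.1 (min'_mem _ hne) with ⟨hA, hB⟩ | ⟨hB, hA⟩
  · exact .inl ⟨_, hA, hB, hbelow⟩
  · exact .inr ⟨_, hB, hA, fun y hy => (hbelow y hy).symm⟩

theorem FirstDiffLt.of_agree_below {A B A' B' : Finset α} {x : α}
    (hA : ∀ y < x, (y ∈ A' ↔ y ∈ A)) (hB : ∀ y < x, (y ∈ B' ↔ y ∈ B)) (h : FirstDiffLt A B) :
    FirstDiffLt A' B' ∨ ∀ y < x, (y ∈ A' ↔ y ∈ B') := by
  obtain ⟨m, hmA, hmB, hbelow⟩ := h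
  rcases lt_or_ge m x with hmx | hxm
  · refine .inl ⟨m, (hA m hmx).2 hmA, mt (hB m hmx).1 hmB, fun y hy => ?_⟩
    rw [hA y (hy.trans hmx), hB y (hy.trans hmx)]
    exact hbelow y hy
  · refine .inr fun y hy => ?_
    rw [hA y hy, hB y hy]
    exact hbelow y (hy.trans_le hxm)

theorem List.lex_lt_of_firstDiff {l₁ l₂ : List α} (h₁ : l₁.Pairwise (· < ·))
    (h₂ : l₂.Pairwise (· < ·)) {m z : α} (hm₁ : m ∈ l₁) (hm₂ : m ∉ l₂) (hz : z ∈ l₂) (hmz : m < z)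
    (hbelow : ∀ y < m, (y ∈ l₁ ↔ y ∈ l₂)) : List.Lex (· < ·) l₁ l₂ := by
  induction l₁ generalizing l₂ with
  | nil => simp at hm₁
  | cons a l₁ ih =>
    obtain - | ⟨b, l₂⟩ := l₂
    · simp at hz
    rw [List.pairwise_cons] at h₁ h₂
    have ham : a ≤ m := (List.mem_cons.1 hm₁).elim ge_of_eq fun h => (h₁.1 m h).le
    rcases lt_trichotomy a b with hab | rfl | hba
    · exact .rel hab
    · have hma : m ≠ a := fun h => hm₂ (h ▸ List.mem_cons_self)
      refine .cons (ih h₁.2 h₂.2 ((List.mem_cons.1 hm₁).resolve_left hma)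
        (fun h => hm₂ (List.mem_cons_of_mem _ h)) ?_ fun y hy => ?_)
      · exact (List.mem_cons.1 hz).resolve_left (by rintro rfl; exact (ham.trans_lt hmz).false)
      · by_cases hya : y = a
        · subst hya
          exact iff_of_false (fun h => (h₁.1 _ h).false) (fun h => (h₂.1 _ h).false)
        · simpa only [List.mem_cons, hya, false_or] using hbelow y hy
    · exfalso
      have hb₁ := (hbelow b (hba.trans_le ham)).2 List.mem_cons_self
      rcases List.mem_cons.1 hb₁ with h | h
      · exact hba.ne h
      · exact (hba.trans (h₁.1 b h)).false

theorem lex_sort_append_of_firstDiffLt {A B : Finset α} {b : α} (hA : ∀ x ∈ A, x < b)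
    (hB : ∀ x ∈ B, x < b) (h : FirstDiffLt A B) :
    List.Lex (· < ·) (A.sort (· ≤ ·) ++ [b]) (B.sort (· ≤ ·) ++ [b]) := by
  have pairwise_sort_append {C : Finset α} (hC : ∀ x ∈ C, x < b) :
      (C.sort (· ≤ ·) ++ [b]).Pairwise (· < ·) :=
    List.pairwise_append.2 ⟨(sortedLT_sort C).pairwise, List.pairwise_singleton _ _,
      fun x hx y hy => List.eq_of_mem_singleton hy ▸ hC x ((mem_sort _).1 hx)⟩
  have mem_sort_append {C : Finset α} {y : α} (hy : y < b) :
      y ∈ C.sort (· ≤ ·) ++ [b] ↔ y ∈ C := by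
    simp [hy.ne]
  obtain ⟨m, hmA, hmB, hbelow⟩ := h
  have hmb := hA m hmA
  refine List.lex_lt_of_firstDiff (pairwise_sort_append hA) (pairwise_sort_append hB)
    ((mem_sort_append hmb).2 hmA) (mt (mem_sort_append hmb).1 hmB) (by simp) hmb
    fun y hy => ?_
  rw [mem_sort_append (hy.trans hmb), mem_sort_append (hy.trans hmb)]
  exact hbelow y hy

end FirstDiff

def gaps {α : Type*} [Sub α] : α → List α → List α
  | _, [] => []
  | a, b :: l => (b - a) :: gaps b l

theorem zipWith_sub_append_eq_gaps {α : Type*} [Sub α] (l : List α) (a b : α) :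
    List.zipWith (· - ·) (l ++ [b]) (a :: l) = gaps a (l ++ [b]) := by
  induction l generalizing a with
  | nil => rfl
  | cons c l ih => simp only [List.cons_append, List.zipWith_cons_cons, gaps, ih]

theorem lex_gaps_iff {α : Type*} [AddCommGroup α] [LinearOrder α] [IsOrderedAddMonoid α]
    (a : α) (l₁ l₂ : List α) :
    List.Lex (· < ·) (gaps a l₁) (gaps a l₂) ↔ List.Lex (· < ·) l₁ l₂ := by
  induction l₁ generalizing a l₂ with
  | nil => cases l₂ <;> simp [gaps]
  | cons b₁ l₁ ih =>
    cases l₂ with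
    | nil => simp [gaps]
    | cons b₂ l₂ =>
      simp only [gaps, List.cons_lex_cons_iff, sub_lt_sub_iff_right, sub_left_inj]
      constructor
      · rintro (h | ⟨rfl, h⟩)
        exacts [.inl h, .inr ⟨rfl, (ih b₁ l₂).1 h⟩]
      · rintro (h | ⟨rfl, h⟩)
        exacts [.inl h, .inr ⟨rfl, (ih b₁ l₂).2 h⟩]

section Offsets

variable {s t : Finset ℝ} {p q : ℝ}

noncomputable def cwOffsets (t : Finset ℝ) (p : ℝ) : Finset ℝ := (t.erase p).image (cwAngle p)

theorem angleSeq_eq_gaps (t : Finset ℝ) (p : ℝ) :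
    angleSeq t p = gaps 0 ((cwOffsets t p).sort (· ≤ ·) ++ [2 * π]) :=
  zipWith_sub_append_eq_gaps _ _ _

theorem lt_two_pi_of_mem_cwOffsets {c : ℝ} (h : c ∈ cwOffsets t p) : c < 2 * π := by
  obtain ⟨x, -, rfl⟩ := Finset.mem_image.1 h
  exact (norm2pi_mem_Ico _).2

theorem angleSeq_lt_iff :
    ListLexLt (angleSeq t p) (angleSeq t q) ↔ FirstDiffLt (cwOffsets t p) (cwOffsets t q) := by
  have of_firstDiffLt {p q : ℝ} (h : FirstDiffLt (cwOffsets t p) (cwOffsets t q)) :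
      ListLexLt (angleSeq t p) (angleSeq t q) := by
    rw [ListLexLt, angleSeq_eq_gaps, angleSeq_eq_gaps, lex_gaps_iff]
    exact lex_sort_append_of_firstDiffLt (fun _ => lt_two_pi_of_mem_cwOffsets)
      (fun _ => lt_two_pi_of_mem_cwOffsets) h
  refine ⟨fun h => ?_, of_firstDiffLt⟩
  rcases eq_or_ne (cwOffsets t p) (cwOffsets t q) with heq | hne
  · rw [ListLexLt, angleSeq_eq_gaps, angleSeq_eq_gaps, heq] at h
    exact absurd h (irrefl _)
  · exact (firstDiffLt_or_firstDiffLt_of_ne hne).resolve_right fun h' =>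
      _root_.asymm (r := List.Lex (· < ·)) h (of_firstDiffLt h')

theorem mem_cwOffsets (ht : OnCircle t) (hp : p ∈ Ico 0 (2 * π)) {c : ℝ} :
    c ∈ cwOffsets t p ↔ c ∈ Ioo 0 (2 * π) ∧ norm2pi (p + c) ∈ t := by
  constructor
  · intro h
    obtain ⟨x, hx, rfl⟩ := Finset.mem_image.1 h
    obtain ⟨hxp, hxt⟩ := Finset.mem_erase.1 hx
    have hx' : x ∈ Ico 0 (2 * π) := ht x hxt
    exact ⟨⟨cwAngle_pos hp hx' hxp.symm, (norm2pi_mem_Ico _).2⟩,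
      (norm2pi_add_cwAngle p hx').symm ▸ hxt⟩
  · rintro ⟨hc, hct⟩
    have hcp : norm2pi (p + c) ≠ p := by
      nth_rw 2 [← norm2pi_add_zero hp]
      exact (injOn_norm2pi_add p).ne (Ico_subset_Ico_left le_rfl (Ioo_subset_Ico_self hc))
        ⟨le_rfl, two_pi_pos⟩ hc.1.ne'
    exact Finset.mem_image.2 ⟨_, Finset.mem_erase.2 ⟨hcp, hct⟩,
      cwAngle_norm2pi_add p (Ioo_subset_Ico_self hc)⟩

theorem pos_of_mem_cwOffsets (ht : OnCircle t) (hp : p ∈ Ico 0 (2 * π)) {c : ℝ}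
    (h : c ∈ cwOffsets t p) : 0 < c :=
  ((mem_cwOffsets ht hp).1 h).1.1

theorem mem_cwOffsets_congr (hs : OnCircle s) (ht : OnCircle t) (hp : p ∈ Ico 0 (2 * π)) {a c : ℝ}
    (hst : ∀ x ≠ a, (x ∈ t ↔ x ∈ s)) (hc : c ∈ Ioo 0 (2 * π) → norm2pi (p + c) ≠ a) :
    c ∈ cwOffsets t p ↔ c ∈ cwOffsets s p := by
  rw [mem_cwOffsets ht hp, mem_cwOffsets hs hp]
  exact and_congr_right fun hc' => hst _ (hc hc')

theorem mem_cwOffsets_norm2pi_add (ht : OnCircle t) (hp : p ∈ Ico 0 (2 * π)) {c d : ℝ}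
    (hc : 0 < c) (hd : 0 < d) (hcd : c + d < 2 * π) :
    c ∈ cwOffsets t (norm2pi (p + d)) ↔ c + d ∈ cwOffsets t p := by
  rw [mem_cwOffsets ht (norm2pi_mem_Ico _), mem_cwOffsets ht hp, norm2pi_norm2pi_add, add_assoc,
    add_comm d c]
  exact and_congr_left fun _ => iff_of_true ⟨hc, by linarith⟩ ⟨by linarith, hcd⟩

theorem FirstDiffLt.cwOffsets_norm2pi_add (ht : OnCircle t) (hp : p ∈ Ico 0 (2 * π)) {d : ℝ}
    (hd : 0 < d) (h : FirstDiffLt (cwOffsets t (norm2pi (p + d))) (cwOffsets t p))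
    (hagree : ∀ y ≤ d, (y ∈ cwOffsets t (norm2pi (p + d)) ↔ y ∈ cwOffsets t p)) :
    FirstDiffLt (cwOffsets t (norm2pi (norm2pi (p + d) + d))) (cwOffsets t (norm2pi (p + d))) := by
  have hq := norm2pi_mem_Ico (p + d)
  obtain ⟨m, hmq, hmp, hbelow⟩ := h
  have hdm : d < m := lt_of_not_ge fun hmd => hmp ((hagree m hmd).1 hmq)
  have hm := lt_two_pi_of_mem_cwOffsets hmq
  refine ⟨m - d, ?_, ?_, fun y hy => ?_⟩
  · rwa [mem_cwOffsets_norm2pi_add ht hq (sub_pos.2 hdm) hd (by linarith), sub_add_cancel]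
  · rwa [mem_cwOffsets_norm2pi_add ht hp (sub_pos.2 hdm) hd (by linarith), sub_add_cancel]
  · rcases le_or_gt y 0 with hy0 | hy0
    · exact iff_of_false (fun h => hy0.not_gt (pos_of_mem_cwOffsets ht (norm2pi_mem_Ico _) h))
        (fun h => hy0.not_gt (pos_of_mem_cwOffsets ht hq h))
    · rw [mem_cwOffsets_norm2pi_add ht hq hy0 hd (by linarith),
        mem_cwOffsets_norm2pi_add ht hp hy0 hd (by linarith)]
      exact hbelow _ (by linarith)

end Offsets

theorem not_isTrueLeader_of_cwAngle_lt_pi {s t : Finset ℝ} {L r : ℝ} (hs : OnCircle s)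
    (ht : OnCircle t) (hL : IsTrueLeader s L) (hr : r ∈ s) (hrL : r ≠ L) (hd : cwAngle L r < π)
    (hst : ∀ x ≠ antip r, (x ∈ t ↔ x ∈ s)) : ¬ IsTrueLeader t r := by
  intro hlead
  have hLI : L ∈ Ico 0 (2 * π) := hs L hL.1
  have hrI : r ∈ Ico 0 (2 * π) := hs r hr
  set d := cwAngle L r
  have hd0 : 0 < d := cwAngle_pos hLI hrI hrL.symm
  have hLd : norm2pi (L + d) = r := norm2pi_add_cwAngle L hrI
  have hantip : antip r = norm2pi (L + (d + π)) := by
    rw [antip, ← hLd, norm2pi_norm2pi_add, add_assoc]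
  have hdπ : d + π ∈ Ico 0 (2 * π) := ⟨by positivity, by linarith⟩
  have hLagree : ∀ y < π, (y ∈ cwOffsets t L ↔ y ∈ cwOffsets s L) := fun y hy =>
    mem_cwOffsets_congr hs ht hLI hst fun hy' => hantip ▸
      (injOn_norm2pi_add L).ne (Ioo_subset_Ico_self hy') hdπ (by linarith)
  have hragree : ∀ y < π, (y ∈ cwOffsets t r ↔ y ∈ cwOffsets s r) := fun y hy =>
    mem_cwOffsets_congr hs ht hrI hst fun hy' =>
      (injOn_norm2pi_add r).ne (Ioo_subset_Ico_self hy') ⟨pi_pos.le, by linarith [pi_pos]⟩ hy.ne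
  have hLt : L ∈ t := by
    refine (hst L ?_).2 hL.1
    rw [hantip]
    nth_rw 1 [← norm2pi_add_zero hLI]
    exact (injOn_norm2pi_add L).ne ⟨le_rfl, two_pi_pos⟩ hdπ (by positivity)
  have hrL' := angleSeq_lt_iff.1 (hlead.2 L hLt hrL.symm)
  rcases (angleSeq_lt_iff.1 (hL.2 r hr hrL)).of_agree_below hLagree hragree with hLr' | hagree
  · exact hLr'.asymm hrL'
  · have hdr : d ∈ cwOffsets t r :=
      (hagree d hd).1 ((mem_cwOffsets ht hLI).2 ⟨⟨hd0, by linarith [pi_pos]⟩, hLd ▸ hlead.1⟩)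
    have hr₂ : norm2pi (r + d) ∈ t := ((mem_cwOffsets ht hrI).1 hdr).2
    have hr₂r : norm2pi (r + d) ≠ r := by
      nth_rw 2 [← norm2pi_add_zero hrI]
      exact (injOn_norm2pi_add r).ne ⟨hd0.le, by linarith [pi_pos]⟩ ⟨le_rfl, two_pi_pos⟩ hd0.ne'
    have hr₂r' := FirstDiffLt.cwOffsets_norm2pi_add ht hLI hd0 (by rwa [hLd])
      (by rw [hLd]; exact fun y hy => (hagree y (hy.trans_lt hd)).symm)
    rw [hLd] at hr₂r'
    exact hr₂r'.asymm (angleSeq_lt_iff.1 (hlead.2 _ hr₂ hr₂r))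

theorem OnCircle.confC0 {s : Finset ℝ} (hs : OnCircle s) (r : ℝ) : OnCircle (confC0 s r) :=
  fun x hx => hs x (Finset.mem_of_mem_erase hx)

theorem OnCircle.confC1 {s : Finset ℝ} (hs : OnCircle s) (r : ℝ) : OnCircle (confC1 s r) := by
  intro x hx
  rcases Finset.mem_insert.1 hx with rfl | hx
  exacts [norm2pi_mem_Ico _, hs x hx]

theorem mem_confC0_iff {s : Finset ℝ} {r x : ℝ} (hx : x ≠ antip r) : x ∈ confC0 s r ↔ x ∈ s :=
  Finset.mem_erase.trans (and_iff_right hx)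

theorem mem_confC1_iff {s : Finset ℝ} {r x : ℝ} (hx : x ≠ antip r) : x ∈ confC1 s r ↔ x ∈ s :=
  Finset.mem_insert.trans (or_iff_right hx)

theorem ExpectedLeader.isTrueLeader_confC0_or_confC1 {s : Finset ℝ} {r : ℝ} (hasym : RotAsym s)
    (h : ExpectedLeader s r) : IsTrueLeader (confC0 s r) r ∨ IsTrueLeader (confC1 s r) r := by
  rcases h with ⟨-, h₀, h₁⟩ | ⟨-, -, -, h⟩
  · by_cases ha : antip r ∈ s
    · exact .inr (h₁ (by rwa [confC1, Finset.insert_eq_of_mem ha]))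
    · exact .inl (h₀ (by rwa [confC0, Finset.erase_eq_of_notMem ha]))
  · exact Xor.or h

/-- an expected leader distinct from the true leader `L` lies at
clockwise angular distance at least `π` from `L`. -/
theorem expected_leader_cwAngle_ge_pi
    (s : Finset ℝ) (hcirc : OnCircle s) (hasym : RotAsym s)
    (L : ℝ) (hL : IsTrueLeader s L)
    (r : ℝ) (hr : r ∈ s) (hrL : r ≠ L) (hexp : ExpectedLeader s r) :
    π ≤ cwAngle L r := by
  by_contra! hlt
  rcases hexp.isTrueLeader_confC0_or_confC1 hasym with h | h
  · exact not_isTrueLeader_of_cwAngle_lt_pi hcirc (hcirc.confC0 r) hL hr hrL hlt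
      (fun _ => mem_confC0_iff) h
  · exact not_isTrueLeader_of_cwAngle_lt_pi hcirc (hcirc.confC1 r) hL hr hrL hlt
      (fun _ => mem_confC1_iff) h
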